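/- arXiv:1010.0751 — 2 statements merged into one kernel-verified Lean document; each statement's English description precedes it below -/
import Mathlib

section
/- The Lyapunov exponent is upper-semicontinuous on frequencies and continuous M₂(ℂ)-cocycles: if β_n → β in ℝ and D_n → D uniformly on ℝ, where D and all D_n are continuous 1-periodic functions ℝ → M₂(ℂ), then limsup_{n→∞} L(β_n, D_n) ≤ L(β, D) in ℝ ∪ {−∞}. -/
open MeasureTheory Filter Complex
open scoped ENNReal Real NNReal

noncomputable section

attribute [local instance] Matrix.frobeniusNormedAddCommGroup

/-- The `n`-step cocycle iterate `D^{(n)}_β(x) = D(x+(n-1)β)⋯D(x)`. -/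
def cocycleIter (D : ℝ → Matrix (Fin 2) (Fin 2) ℂ) (β : ℝ) : ℕ → ℝ → Matrix (Fin 2) (Fin 2) ℂ
  | 0, _ => 1
  | n + 1, x => cocycleIter D β n (x + β) * D x

/-- The extended-real-valued integral `∫₀¹ log (g x) dx`, with value `-∞` allowed
(the positive and negative parts are integrated separately; `log 0 = -∞`). -/
def logIntegral (g : ℝ → ℝ) : EReal :=
  ((∫⁻ x in Set.Ioc (0 : ℝ) 1, ENNReal.ofReal (Real.log (g x))) : EReal) -
    ((∫⁻ x in Set.Ioc (0 : ℝ) 1,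
        if g x = 0 then (⊤ : ℝ≥0∞) else ENNReal.ofReal (-Real.log (g x))) : EReal)

/-- The Lyapunov exponent `L(β, D) = inf_{n ≥ 1} (1/n) ∫₀¹ log ‖D^{(n)}_β(x)‖ dx ∈ ℝ ∪ {-∞}`. -/
def lyapunov (β : ℝ) (D : ℝ → Matrix (Fin 2) (Fin 2) ℂ) : EReal :=
  ⨅ n : ℕ, ((((n : ℝ) + 1)⁻¹ : ℝ) : EReal) * logIntegral fun x => ‖cocycleIter D β (n + 1) x‖

/-! For fixed `k`, the iterate `D^{(k)}_β` depends continuously on `(D, β)` in the compact-open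
topology, so `‖(Dₙ)^{(k)}_{βₙ}‖ ≤ ‖D^{(k)}_β‖ + ε` on `[0, 1]` for large `n`. Monotonicity of the
log-integral bounds the limsup of `∫ log ‖(Dₙ)^{(k)}_{βₙ}‖` by `∫ log (‖D^{(k)}_β‖ + ε)`, which
tends to `∫ log ‖D^{(k)}_β‖` as `ε ↓ 0` by monotone convergence, applied separately to the
positive and the negative part of `log`. Since `L(β, D)` is the infimum over `k` of these
normalised integrals, this bounds `limsup L(βₙ, Dₙ)`. -/

open Set Topology

theorem ENNReal.ofReal_log_eq_ofReal_posLog (x : ℝ) :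
    ENNReal.ofReal (Real.log x) = ENNReal.ofReal (Real.posLog x) := by
  simp [Real.posLog, ENNReal.ofReal_max]

theorem tendsto_ofReal_log_add {ε : ℕ → ℝ} (hε : Tendsto ε atTop (𝓝 0)) (t : ℝ) :
    Tendsto (fun m => ENNReal.ofReal (Real.log (t + ε m))) atTop
      (𝓝 (ENNReal.ofReal (Real.log t))) := by
  simp only [ENNReal.ofReal_log_eq_ofReal_posLog]
  have : Tendsto (fun m => t + ε m) atTop (𝓝 t) := by simpa using tendsto_const_nhds.add hε
  exact ENNReal.tendsto_ofReal ((Real.continuous_posLog.tendsto t).comp this)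

theorem tendsto_ofReal_neg_log_add {ε : ℕ → ℝ} (hε₀ : ∀ m, 0 < ε m)
    (hε : Tendsto ε atTop (𝓝 0)) {t : ℝ} (ht : 0 ≤ t) :
    Tendsto (fun m => ENNReal.ofReal (-Real.log (t + ε m))) atTop
      (𝓝 (if t = 0 then ⊤ else ENNReal.ofReal (-Real.log t))) := by
  rcases ht.eq_or_lt with rfl | ht
  · have hε' : Tendsto ε atTop (𝓝[>] 0) :=
      tendsto_nhdsWithin_iff.2 ⟨hε, Eventually.of_forall hε₀⟩
    simpa only [zero_add, if_true, Function.comp_def] using ENNReal.tendsto_ofReal_atTop.comp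
      (tendsto_neg_atBot_atTop.comp (Real.tendsto_log_nhdsGT_zero.comp hε'))
  · have : Tendsto (fun m => t + ε m) atTop (𝓝 t) := by simpa using tendsto_const_nhds.add hε
    rw [if_neg ht.ne']
    exact ENNReal.tendsto_ofReal ((Real.continuousAt_log ht.ne').tendsto.comp this).neg

theorem EReal.tendsto_coe_ennreal_sub {α : Type*} {l : Filter α} {a b : α → ℝ≥0∞}
    {A B : ℝ≥0∞} (ha : Tendsto a l (𝓝 A)) (hb : Tendsto b l (𝓝 B)) (hA : A ≠ ⊤) :
    Tendsto (fun i => (a i : EReal) - b i) l (𝓝 ((A : EReal) - B)) := by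
  have hadd := EReal.continuousAt_add (p := ((A : EReal), -(B : EReal)))
    (Or.inl (by simpa using hA)) (Or.inl (EReal.coe_ennreal_ne_bot A))
  simpa only [sub_eq_add_neg, Function.comp_def] using hadd.tendsto.comp
    ((EReal.tendsto_coe_ennreal.2 ha).prodMk_nhds (EReal.tendsto_coe_ennreal.2 hb).neg)

theorem setLIntegral_ofReal_log_ne_top {α : Type*} [MeasurableSpace α] {μ : Measure α}
    {s : Set α} (hs : μ s ≠ ∞) {f : α → ℝ} {C : ℝ} (h₀ : ∀ x ∈ s, 0 ≤ f x)
    (hC : ∀ x ∈ s, f x ≤ C) :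
    ∫⁻ x in s, ENNReal.ofReal (Real.log (f x)) ∂μ ≠ ∞ := by
  refine (setLIntegral_lt_top_of_le_nnreal hs ⟨(Real.posLog C).toNNReal, fun x hx => ?_⟩).ne
  rw [ENNReal.ofReal_log_eq_ofReal_posLog]
  exact ENNReal.ofReal_le_ofReal (Real.posLog_le_posLog (h₀ x hx) (hC x hx))

theorem logIntegral_mono {g₁ g₂ : ℝ → ℝ} (h₀ : ∀ x ∈ Ioc (0 : ℝ) 1, 0 ≤ g₁ x)
    (h : ∀ x ∈ Ioc (0 : ℝ) 1, g₁ x ≤ g₂ x) : logIntegral g₁ ≤ logIntegral g₂ := by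
  refine EReal.sub_le_sub ?_ ?_ <;>
    refine EReal.coe_ennreal_le_coe_ennreal_iff.2
      (setLIntegral_mono' measurableSet_Ioc fun x hx => ?_) <;>
    rcases (h₀ x hx).eq_or_lt with hx₀ | hx₀
  · simp [← hx₀]
  · exact ENNReal.ofReal_le_ofReal (Real.log_le_log hx₀ (h x hx))
  · simp [← hx₀]
  · rw [if_neg hx₀.ne', if_neg (hx₀.trans_le (h x hx)).ne']
    exact ENNReal.ofReal_le_ofReal (neg_le_neg (Real.log_le_log hx₀ (h x hx)))

theorem logIntegral_of_pos {g : ℝ → ℝ} (hg : ∀ x, 0 < g x) :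
    logIntegral g = ((∫⁻ x in Ioc (0 : ℝ) 1, ENNReal.ofReal (Real.log (g x))) : EReal) -
      ((∫⁻ x in Ioc (0 : ℝ) 1, ENNReal.ofReal (-Real.log (g x))) : EReal) := by
  simp only [logIntegral, (hg _).ne', if_false]

theorem tendsto_logIntegral_add {g : ℝ → ℝ} {ε : ℕ → ℝ} (hg : Measurable g)
    (hg₀ : ∀ x, 0 ≤ g x) (hbdd : BddAbove (g '' Ioc 0 1)) (hε₀ : ∀ m, 0 < ε m)
    (hε_anti : Antitone ε) (hε : Tendsto ε atTop (𝓝 0)) :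
    Tendsto (fun m => logIntegral fun x => g x + ε m) atTop (𝓝 (logIntegral g)) := by
  obtain ⟨C, hC⟩ := hbdd
  have hC' : ∀ x ∈ Ioc (0 : ℝ) 1, g x ≤ C := fun x hx => hC (mem_image_of_mem g hx)
  have hpos : ∀ m x, 0 < g x + ε m := fun m x => add_pos_of_nonneg_of_pos (hg₀ x) (hε₀ m)
  have hlog_le : ∀ x {m m'}, m ≤ m' → Real.log (g x + ε m') ≤ Real.log (g x + ε m) :=
    fun x m m' h => Real.log_le_log (hpos m' x) (by linarith [hε_anti h])
  have hmeas : ∀ m, Measurable fun x => Real.log (g x + ε m) :=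
    fun m => Real.measurable_log.comp (hg.add_const _)
  simp only [logIntegral_of_pos (hpos _)]
  refine EReal.tendsto_coe_ennreal_sub ?_ ?_
    (setLIntegral_ofReal_log_ne_top (by simp) (fun x _ => hg₀ x) hC')
  · refine lintegral_tendsto_of_tendsto_of_antitone
      (fun m => (hmeas m).ennreal_ofReal.aemeasurable)
      (Eventually.of_forall fun x m m' h => ENNReal.ofReal_le_ofReal (hlog_le x h))
      (setLIntegral_ofReal_log_ne_top (C := C + ε 0) (by simp) (fun x _ => (hpos 0 x).le)
        fun x hx => by linarith [hC' x hx])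
      (Eventually.of_forall fun x => tendsto_ofReal_log_add hε (g x))
  · exact lintegral_tendsto_of_tendsto_of_monotone
      (fun m => (hmeas m).neg.ennreal_ofReal.aemeasurable)
      (Eventually.of_forall fun x m m' h => ENNReal.ofReal_le_ofReal (neg_le_neg (hlog_le x h)))
      (Eventually.of_forall fun x => tendsto_ofReal_neg_log_add hε₀ hε (hg₀ x))

theorem limsup_logIntegral_le {G : ℕ → ℝ → ℝ} {g : ℝ → ℝ} (hg : Measurable g)
    (hg₀ : ∀ x, 0 ≤ g x) (hbdd : BddAbove (g '' Ioc 0 1))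
    (hG₀ : ∀ n, ∀ x ∈ Ioc (0 : ℝ) 1, 0 ≤ G n x)
    (hG : TendstoUniformlyOn G g atTop (Ioc 0 1)) :
    limsup (fun n => logIntegral (G n)) atTop ≤ logIntegral g := by
  have hε₀ : ∀ m : ℕ, (0 : ℝ) < 1 / (m + 1) := fun m => Nat.one_div_pos_of_nat
  have hε_anti : Antitone fun m : ℕ => (1 : ℝ) / (m + 1) :=
    fun m m' h => one_div_le_one_div_of_le (by positivity) (by gcongr)
  refine ge_of_tendsto' (tendsto_logIntegral_add hg hg₀ hbdd hε₀ hε_anti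
    tendsto_one_div_add_atTop_nhds_zero_nat) fun m => limsup_le_of_le (by isBoundedDefault) ?_
  filter_upwards [Metric.tendstoUniformlyOn_iff.1 hG _ (hε₀ m)] with n hn
  refine logIntegral_mono (hG₀ n) fun x hx => ?_
  have := hn x hx
  rw [Real.dist_eq, abs_sub_lt_iff] at this
  linarith

theorem continuous_cocycleIter_uncurry (k : ℕ) :
    Continuous fun p : (C(ℝ, Matrix (Fin 2) (Fin 2) ℂ) × ℝ) × ℝ =>
      cocycleIter p.1.1 p.1.2 k p.2 := by
  induction k with
  | zero => exact continuous_const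
  | succ k ih =>
    exact (ih.comp (continuous_fst.prodMk (continuous_snd.add continuous_fst.snd))).mul
      (continuous_eval.comp (continuous_fst.fst.prodMk continuous_snd))

theorem continuous_cocycleIter {D : ℝ → Matrix (Fin 2) (Fin 2) ℂ} (hD : Continuous D)
    (β : ℝ) (k : ℕ) : Continuous (cocycleIter D β k) :=
  (continuous_cocycleIter_uncurry k).comp
    (continuous_const (y := ((⟨D, hD⟩ : C(ℝ, _)), β)).prodMk continuous_id)

theorem tendstoLocallyUniformly_cocycleIter {β : ℝ} {βseq : ℕ → ℝ}
    {D : ℝ → Matrix (Fin 2) (Fin 2) ℂ} {Dseq : ℕ → ℝ → Matrix (Fin 2) (Fin 2) ℂ}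
    (hD : Continuous D) (hDn : ∀ n, Continuous (Dseq n)) (hβ : Tendsto βseq atTop (𝓝 β))
    (hDlim : TendstoLocallyUniformly Dseq D atTop) (k : ℕ) :
    TendstoLocallyUniformly (fun n => cocycleIter (Dseq n) (βseq n) k) (cocycleIter D β k)
      atTop := by
  let iter : C(C(ℝ, Matrix (Fin 2) (Fin 2) ℂ) × ℝ, C(ℝ, Matrix (Fin 2) (Fin 2) ℂ)) :=
    ContinuousMap.curry ⟨_, continuous_cocycleIter_uncurry k⟩
  have hseq : Tendsto (fun n => ((⟨Dseq n, hDn n⟩ : C(ℝ, _)), βseq n)) atTop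
      (𝓝 (⟨D, hD⟩, β)) :=
    (ContinuousMap.tendsto_iff_tendstoLocallyUniformly.2 hDlim).prodMk_nhds hβ
  exact ContinuousMap.tendsto_iff_tendstoLocallyUniformly.1
    ((iter.continuous.tendsto _).comp hseq)

theorem lyapunov_upper_semicontinuous_general
    (β : ℝ) (βseq : ℕ → ℝ)
    (D : ℝ → Matrix (Fin 2) (Fin 2) ℂ) (Dseq : ℕ → ℝ → Matrix (Fin 2) (Fin 2) ℂ)
    (hD : Continuous D)
    (hDn : ∀ n, Continuous (Dseq n))
    (hβ : Tendsto βseq atTop (nhds β))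
    (hunif : TendstoUniformly Dseq D atTop) :
    Filter.limsup (fun n => lyapunov (βseq n) (Dseq n)) atTop ≤ lyapunov β D := by
  refine le_iInf fun k => ?_
  set c : EReal := ((((k : ℝ) + 1)⁻¹ : ℝ) : EReal)
  have hc : 0 ≤ c := EReal.coe_nonneg.2 (by positivity)
  have hcont : Continuous fun x => ‖cocycleIter D β (k + 1) x‖ :=
    (continuous_cocycleIter hD β (k + 1)).norm
  have hiter := tendstoLocallyUniformly_cocycleIter hD hDn hβ hunif.tendstoLocallyUniformly (k + 1)
  have hnorm := uniformContinuous_norm.comp_tendstoUniformlyOn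
    ((tendstoLocallyUniformly_iff_forall_isCompact.1 hiter _ (isCompact_Icc (a := 0) (b := 1))
      ).mono Ioc_subset_Icc_self)
  calc limsup (fun n => lyapunov (βseq n) (Dseq n)) atTop
      ≤ limsup (fun n => c * logIntegral fun x => ‖cocycleIter (Dseq n) (βseq n) (k + 1) x‖)
          atTop := limsup_le_limsup (Eventually.of_forall fun n => iInf_le _ k)
    _ = c * limsup (fun n => logIntegral fun x => ‖cocycleIter (Dseq n) (βseq n) (k + 1) x‖)
          atTop := EReal.limsup_const_mul_of_nonneg_of_ne_top hc (EReal.coe_ne_top _)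
    _ ≤ c * logIntegral fun x => ‖cocycleIter D β (k + 1) x‖ :=
      mul_le_mul_of_nonneg_left (limsup_logIntegral_le hcont.measurable (fun _ => norm_nonneg _)
        ((isCompact_Icc.bddAbove_image hcont.continuousOn).mono (image_mono Ioc_subset_Icc_self))
        (fun _ _ _ => norm_nonneg _) hnorm) hc

/-- Upper semicontinuity of the Lyapunov exponent on continuous
`M₂(ℂ)`-cocycles: if `βₙ → β` and `Dₙ → D` uniformly on `ℝ` (all `Dₙ`, `D` continuous and
1-periodic), then `limsup L(βₙ, Dₙ) ≤ L(β, D)` in `ℝ ∪ {-∞}`. -/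
theorem lyapunov_upper_semicontinuous
    (β : ℝ) (βseq : ℕ → ℝ)
    (D : ℝ → Matrix (Fin 2) (Fin 2) ℂ) (Dseq : ℕ → ℝ → Matrix (Fin 2) (Fin 2) ℂ)
    (hD : Continuous D) (hDper : Function.Periodic D 1)
    (hDn : ∀ n, Continuous (Dseq n)) (hDnper : ∀ n, Function.Periodic (Dseq n) 1)
    (hβ : Tendsto βseq atTop (nhds β))
    (hunif : TendstoUniformly Dseq D atTop) :
    Filter.limsup (fun n => lyapunov (βseq n) (Dseq n)) atTop ≤ lyapunov β D :=
  lyapunov_upper_semicontinuous_general β βseq D Dseq hD hDn hβ hunif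
end
end

section
/- Let δ > 0 and let f : {z ∈ ℂ : |Im z| < δ} → ℂ be holomorphic with f(z+1) = f(z) for all z in the strip, and suppose min_{x ∈ [0,1]} |f(x)| > 0 (f does not vanish on ℝ). Then there exist δ′ ∈ (0, δ] and a holomorphic function g : {z ∈ ℂ : |Im z| < δ′} → ℂ such that g(z+2) = g(z) and g(z)² = f(z) for all z with |Im z| < δ′. (A 1-periodic analytic function nonvanishing on the reals has a 2-periodic analytic square root.) -/
/-!
The strip `|Im z| < δ'` is convex, hence simply connected, so a holomorphic function without
zeros on it has a continuous `n`-th root, which is holomorphic because `w ↦ wⁿ` is locally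
invertible away from `0`. By compactness of `[0, 1]` and periodicity, `f` has no zeros on a thin
enough strip. For a square root `g` of `f` there, `g (z + 1) / g z` is a continuous `±1`-valued
function on a connected set, hence a constant `ε`, and `g (z + 2) = ε² g z = g z`.
-/

open Complex Filter Set Topology

theorem isOpen_setOf_abs_im_lt (δ : ℝ) : IsOpen {z : ℂ | |z.im| < δ} :=
  isOpen_lt (continuous_abs.comp continuous_im) continuous_const

theorem convex_setOf_abs_im_lt (δ : ℝ) : Convex ℝ {z : ℂ | |z.im| < δ} := by
  simpa [Set.preimage, Real.norm_eq_abs] using (convex_ball (0 : ℝ) δ).linear_preimage imLm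

theorem Convex.isSimplyConnected {E : Type*} [AddCommGroup E] [Module ℝ E] [TopologicalSpace E]
    [ContinuousAdd E] [ContinuousSMul ℝ E] {s : Set E} (hs : Convex ℝ s) (hne : s.Nonempty) :
    IsSimplyConnected s :=
  haveI := hs.contractibleSpace hne
  inferInstanceAs (SimplyConnectedSpace s)

theorem DifferentiableAt.of_comp_eventuallyEq {𝕜 : Type*} [NontriviallyNormedField 𝕜]
    [CompleteSpace 𝕜] {φ L f : 𝕜 → 𝕜} {z φ' : 𝕜} (hL : ContinuousAt L z)
    (hφ : HasStrictDerivAt φ φ' (L z)) (hφ' : φ' ≠ 0) (hf : DifferentiableAt 𝕜 f z)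
    (hφL : ∀ᶠ w in 𝓝 z, φ (L w) = f w) : DifferentiableAt 𝕜 L z := by
  set ψ := hφ.localInverse φ φ' (L z) hφ'
  have hψ : DifferentiableAt 𝕜 ψ (f z) := by
    rw [← hφL.self_of_nhds]
    exact (hφ.to_localInverse hφ').hasDerivAt.differentiableAt
  have hψf : ψ ∘ f =ᶠ[𝓝 z] L := by
    filter_upwards [hL.eventually (hφ.eventually_left_inverse hφ'), hφL] with w hw hφw
    rw [Function.comp_apply, ← hφw]
    exact hw
  exact (hψ.comp z hf).congr_of_eventuallyEq hψf.symm

theorem exists_differentiableOn_pow_eq {U : Set ℂ} (hUc : IsSimplyConnected U) (hUo : IsOpen U)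
    {f : ℂ → ℂ} (hf : DifferentiableOn ℂ f U) (hf0 : ∀ z ∈ U, f z ≠ 0) {n : ℕ} (hn : n ≠ 0) :
    ∃ g : ℂ → ℂ, DifferentiableOn ℂ g U ∧ ∀ z, g z ^ n = f z := by
  obtain ⟨g, hgc, hgf⟩ := exists_continuousOn_pow_eq hUc hUo hf.continuousOn
    (fun ⟨z, hz, hfz⟩ ↦ hf0 z hz hfz) hn
  refine ⟨g, fun z hz ↦ DifferentiableAt.differentiableWithinAt ?_, hgf⟩
  have hgz : g z ≠ 0 := fun h ↦ hf0 z hz (by rw [← hgf, h, zero_pow hn])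
  exact .of_comp_eventuallyEq (hgc.continuousAt (hUo.mem_nhds hz))
    (hasStrictDerivAt_pow n (g z)) (by simp [hn, hgz])
    (hf.differentiableAt (hUo.mem_nhds hz)) (.of_forall hgf)

theorem isDiscrete_setOf_pow_eq_one {n : ℕ} (hn : n ≠ 0) : IsDiscrete {w : ℂ | w ^ n = 1} := by
  refine Set.Finite.isDiscrete ?_
  convert (Polynomial.nthRoots n (1 : ℂ)).toFinset.finite_toSet using 1
  ext w
  simp [Polynomial.mem_nthRoots (Nat.pos_of_ne_zero hn)]

theorem add_nsmul_eq_of_pow_add_eq {X : Type*} [TopologicalSpace X] [AddMonoid X]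
    [ContinuousAdd X] {U : Set X} (hU : IsPreconnected U) {c : X} (hUc : ∀ x ∈ U, x + c ∈ U)
    {g : X → ℂ} (hg : ContinuousOn g U) (hg0 : ∀ x ∈ U, g x ≠ 0) {n : ℕ} (hn : n ≠ 0)
    (hper : ∀ x ∈ U, g (x + c) ^ n = g x ^ n) {x : X} (hx : x ∈ U) : g (x + n • c) = g x := by
  set ψ : X → ℂ := fun y ↦ g (y + c) / g y
  have hψ_root : ∀ y ∈ U, ψ y ^ n = 1 := fun y hy ↦ by
    rw [div_pow, hper y hy, div_self (pow_ne_zero n (hg0 y hy))]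
  have hψ_cont : ContinuousOn ψ U :=
    ((hg.comp (continuous_add_const c).continuousOn hUc).div hg hg0)
  have hUk : ∀ k : ℕ, x + k • c ∈ U := by
    intro k
    induction k with
    | zero => simpa using hx
    | succ k ih => simpa [succ_nsmul, add_assoc] using hUc _ ih
  have hgk : ∀ k : ℕ, g (x + k • c) = ψ x ^ k * g x := by
    intro k
    induction k with
    | zero => simp
    | succ k ih =>
      have hψk : ψ (x + k • c) = ψ x :=
        hU.constant_of_mapsTo (isDiscrete_setOf_pow_eq_one hn) hψ_cont hψ_root (hUk k) hx
      rw [succ_nsmul, ← add_assoc, pow_succ, mul_right_comm, ← ih, ← hψk]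
      exact (mul_div_cancel₀ _ (hg0 _ (hUk k))).symm
  rw [hgk, hψ_root x hx, one_mul]

theorem add_int_eq_of_add_one_eq_on_abs_im_lt {δ : ℝ} {f : ℂ → ℂ}
    (hper : ∀ z : ℂ, |z.im| < δ → f (z + 1) = f z) (n : ℤ) {z : ℂ} (hz : |z.im| < δ) :
    f (z + n) = f z := by
  have hP : Function.Periodic ({w : ℂ | |w.im| < δ}.indicator f) 1 := fun w ↦ by
    by_cases hw : |w.im| < δ <;> simp [Set.indicator, hw, hper]
  simpa [Set.indicator, hz] using hP.int_mul n z

theorem exists_ne_zero_on_abs_im_lt {δ : ℝ} (hδ : 0 < δ) {f : ℂ → ℂ}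
    (hf : ContinuousOn f {z : ℂ | |z.im| < δ}) (hper : ∀ z : ℂ, |z.im| < δ → f (z + 1) = f z)
    (hmin : ∀ x ∈ Icc (0 : ℝ) 1, f (x : ℂ) ≠ 0) :
    ∃ δ' : ℝ, 0 < δ' ∧ δ' ≤ δ ∧ ∀ z : ℂ, |z.im| < δ' → f z ≠ 0 := by
  obtain ⟨ε, hε, hthick⟩ := (isCompact_Icc.image continuous_ofReal).exists_thickening_subset_open
    (hf.isOpen_inter_preimage (isOpen_setOf_abs_im_lt δ) isOpen_compl_singleton)
    (by rintro _ ⟨x, hx, rfl⟩; exact ⟨by simpa using hδ, hmin x hx⟩)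
  refine ⟨min ε δ, lt_min hε hδ, min_le_right ε δ, fun z hz ↦ ?_⟩
  set w := z - ⌊z.re⌋
  have hw : w ∈ Metric.thickening ε (ofReal '' Icc 0 1) := by
    refine Metric.mem_thickening_iff.2 ⟨w.re, ⟨w.re, ?_, rfl⟩, ?_⟩
    · have hwre : w.re = Int.fract z.re := by simp [w, Int.self_sub_floor]
      rw [hwre]
      exact ⟨Int.fract_nonneg z.re, (Int.fract_lt_one z.re).le⟩
    · rw [Complex.dist_of_re_eq (by simp)]
      simpa [w] using (lt_min_iff.1 hz).1
  have hfw : f w ≠ 0 := (hthick hw).2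
  rwa [← add_int_eq_of_add_one_eq_on_abs_im_lt hper ⌊z.re⌋ (by simpa [w] using
    (lt_min_iff.1 hz).2), sub_add_cancel] at hfw

/-- A 1-periodic function holomorphic on a strip around `ℝ` and
nonvanishing on the reals has a 2-periodic holomorphic square root on a possibly
narrower strip. -/
theorem analytic_periodic_sqrt
    (δ : ℝ) (hδ : 0 < δ) (f : ℂ → ℂ)
    (hf : DifferentiableOn ℂ f {z : ℂ | |z.im| < δ})
    (hper : ∀ z : ℂ, |z.im| < δ → f (z + 1) = f z)
    (hmin : ∀ x ∈ Set.Icc (0:ℝ) 1, f (x : ℂ) ≠ 0) :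
    ∃ δ' : ℝ, 0 < δ' ∧ δ' ≤ δ ∧ ∃ g : ℂ → ℂ,
      DifferentiableOn ℂ g {z : ℂ | |z.im| < δ'} ∧
      (∀ z : ℂ, |z.im| < δ' → g (z + 2) = g z) ∧
      (∀ z : ℂ, |z.im| < δ' → g z ^ 2 = f z) := by
  obtain ⟨δ', hδ', hδ'δ, hf0⟩ := exists_ne_zero_on_abs_im_lt hδ hf.continuousOn hper hmin
  set U := {z : ℂ | |z.im| < δ'}
  have hU : Convex ℝ U := convex_setOf_abs_im_lt δ'
  have hU0 : (0 : ℂ) ∈ U := by simpa [U] using hδ'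
  have hUf : DifferentiableOn ℂ f U := hf.mono fun z hz ↦ lt_of_lt_of_le hz hδ'δ
  obtain ⟨g, hg, hgf⟩ := exists_differentiableOn_pow_eq (hU.isSimplyConnected ⟨0, hU0⟩)
    (isOpen_setOf_abs_im_lt δ') hUf hf0 two_ne_zero
  refine ⟨δ', hδ', hδ'δ, g, hg, fun z hz ↦ ?_, fun z _ ↦ hgf z⟩
  have hg0 : ∀ z ∈ U, g z ≠ 0 := fun z hz h ↦ hf0 z hz (by rw [← hgf, h, zero_pow two_ne_zero])
  simpa [one_add_one_eq_two] using add_nsmul_eq_of_pow_add_eq (c := 1) hU.isPreconnected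
    (fun z hz ↦ by simpa [U] using hz) hg.continuousOn hg0 two_ne_zero
    (fun z hz ↦ by rw [hgf, hgf, hper z (lt_of_lt_of_le hz hδ'δ)]) hz
end
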